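/- arXiv:0804.2948 — 2 statements merged into one kernel-verified Lean document; each statement's English description precedes it below -/
import Mathlib

section
/- For any integer g ≥ 1, the sum of (-1)^{1 - 2g/n} φ(n) over divisors n of 2g with n > 1 equals 1. -/
/-!
Splitting the divisors `d` of `2m` according to whether `d ∣ m` (exactly when `2m / d` is even),
`∑_{d ∣ m} φ d = m` and `∑_{d ∣ 2m} φ d = 2m` show that `∑_{d ∣ 2m} (-1)^(2m/d) φ d = m - m = 0`.
Removing the term `d = 1`, which is `-1` after the sign change `(-1)^(1-k) = -(-1)^k`, leaves `1`.
-/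

open Finset Nat

lemma neg_one_zpow_one_sub_natCast {R : Type*} [DivisionRing R] (k : ℕ) :
    (-1 : R) ^ ((1 : ℤ) - k) = -(-1) ^ k := by
  rcases Nat.even_or_odd k with hk | hk <;>
    simp [neg_one_zpow_eq_ite, Int.even_sub, hk, Nat.not_even_iff_odd.mpr]

lemma Nat.filter_one_lt_divisors (n : ℕ) : n.divisors.filter (1 < ·) = n.divisors.erase 1 := by
  ext d
  simp only [mem_filter, mem_erase]
  constructor
  · rintro ⟨hd, h1⟩
    exact ⟨h1.ne', hd⟩
  · rintro ⟨h1, hd⟩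
    exact ⟨hd, by have := Nat.pos_of_mem_divisors hd; omega⟩

lemma Nat.odd_two_mul_div_of_not_dvd {m d : ℕ} (hd : d ∣ 2 * m) (hdm : ¬d ∣ m) :
    Odd (2 * m / d) := by
  obtain ⟨k, hk⟩ := hd
  rcases Nat.eq_zero_or_pos d with rfl | hd0
  · simp_all
  rw [hk, Nat.mul_div_cancel_left k hd0, ← Nat.not_even_iff_odd]
  rintro ⟨j, rfl⟩
  exact hdm ⟨j, by linarith⟩

lemma Nat.sum_divisors_not_dvd_totient {m : ℕ} (hm : m ≠ 0) :
    ∑ d ∈ (2 * m).divisors with ¬d ∣ m, φ d = m := by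
  have htotal := sum_filter_add_sum_filter_not (2 * m).divisors (· ∣ m) φ
  rw [Nat.divisors_filter_dvd_of_dvd (by omega) (dvd_mul_left m 2), Nat.sum_totient,
    Nat.sum_totient] at htotal
  omega

lemma Nat.sum_divisors_neg_one_pow_div_mul_totient_of_even {R : Type*} [CommRing R] {n : ℕ}
    (hn : Even n) : ∑ d ∈ n.divisors, (-1 : R) ^ (n / d) * φ d = 0 := by
  obtain ⟨m, rfl⟩ := hn
  rw [← two_mul]
  rcases eq_or_ne m 0 with rfl | hm
  · simp
  rw [← sum_filter_add_sum_filter_not _ (· ∣ m)]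
  have hdvd : ∑ d ∈ (2 * m).divisors with d ∣ m, (-1 : R) ^ (2 * m / d) * φ d = m := by
    rw [Nat.divisors_filter_dvd_of_dvd (by omega) (dvd_mul_left m 2)]
    conv_rhs => rw [← Nat.sum_totient m, Nat.cast_sum]
    refine sum_congr rfl fun d hd => ?_
    rw [Nat.mul_div_assoc 2 (Nat.dvd_of_mem_divisors hd), (even_two_mul _).neg_one_pow, one_mul]
  have hndvd : ∑ d ∈ (2 * m).divisors with ¬d ∣ m, (-1 : R) ^ (2 * m / d) * φ d = -m := by
    conv_rhs => rw [← Nat.sum_divisors_not_dvd_totient hm, Nat.cast_sum, ← sum_neg_distrib]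
    refine sum_congr rfl fun d hd => ?_
    obtain ⟨hd2m, hdm⟩ := mem_filter.mp hd
    rw [(Nat.odd_two_mul_div_of_not_dvd (Nat.dvd_of_mem_divisors hd2m) hdm).neg_one_pow,
      neg_one_mul]
  rw [hdvd, hndvd, add_neg_cancel]

theorem sum_signed_totient_divisors_even (g : ℕ) (hg : 1 ≤ g) :
    ∑ n ∈ (2 * g).divisors.filter (fun n => 1 < n),
      (-1 : ℚ) ^ ((1 : ℤ) - (2 * g / n : ℕ)) * (Nat.totient n : ℚ) = 1 := by
  simp_rw [Nat.filter_one_lt_divisors, neg_one_zpow_one_sub_natCast, neg_mul, sum_neg_distrib]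
  rw [sum_erase_eq_sub (Nat.one_mem_divisors.mpr (by omega)),
    Nat.sum_divisors_neg_one_pow_div_mul_totient_of_even (even_two_mul g)]
  simp
end

section
/- For any integer g ≥ 2 and any n ≥ 0, the sum over all pairs (j, r) of nonnegative integers with j + 2r ≤ n and j ≤ 2g+2 of (-1)^{n-j-r} · 2^{n-j-2r} · (2g-1+n-j-r)! / (j! · r! · (2g+2-j)! · (n-j-2r)!) equals (-1)^n · (2g+n-3)! / (2g·(2g+1)·(2g+2)·n!·(2g-3)!). -/
/-!
All three sums are coefficient extractions from powers of `1 - X`. Writing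
`c_k = binom(G + k, G)` for the coefficients of `(1 - X)^{-(G+1)}` and substituting
`X (2 - X) = 1 - (1 - X)^2` gives `(1 - X)^{-(2G+2)}`; reading off the coefficient of `X^m`
evaluates the sum over `r` in closed form. With `G = 2g - 1` the sum over `j` then becomes the
coefficient of `X^n` in `(1 - X)^{2g+2} (1 - X)^{-4g} = (1 - X)^{-(2g-2)}`, that is
`binom(2g - 3 + n, n)`, and what remains is factorial bookkeeping.
-/

open Finset PowerSeries

namespace PowerSeries

variable {R : Type*} [CommRing R]

theorem coeff_C_sub_X_pow (a : R) (k i : ℕ) :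
    coeff i ((C a - X) ^ k) = (-1) ^ i * a ^ (k - i) * k.choose i := by
  have term (m : ℕ) : (-X) ^ m * C a ^ (k - m) * (k.choose m : R⟦X⟧) =
      C ((-1) ^ m * a ^ (k - m) * k.choose m) * X ^ m := by
    rw [neg_pow X]; simp only [map_mul, map_pow, map_neg, map_one, map_natCast]; ring
  simp only [sub_eq_neg_add, add_pow, term, map_sum, coeff_C_mul_X_pow]
  rw [sum_ite_eq]
  split_ifs with hi
  · rfl
  · rw [Nat.choose_eq_zero_of_lt (by simpa using hi)]
    simp

theorem coeff_X_mul_C_sub_X_pow (a : R) (k m : ℕ) :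
    coeff m ((X * (C a - X)) ^ k) =
      if k ≤ m then (-1) ^ (m - k) * a ^ (k - (m - k)) * k.choose (m - k) else 0 := by
  rw [mul_pow, coeff_X_pow_mul', coeff_C_sub_X_pow]

theorem coeff_one_sub_X_pow (k i : ℕ) : coeff i ((1 - X : R⟦X⟧) ^ k) = (-1) ^ i * k.choose i := by
  simpa using coeff_C_sub_X_pow (1 : R) k i

theorem hasSubst_X_mul_C_sub_X (a : R) : HasSubst (X * (C a - X) : R⟦X⟧) :=
  HasSubst.of_constantCoeff_zero' (by simp)

theorem subst_X_mul_two_sub_X_invOneSubPow (d : ℕ) :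
    (invOneSubPow R d).val.subst (X * (C 2 - X) : R⟦X⟧) = (invOneSubPow R (2 * d)).val := by
  have ha := hasSubst_X_mul_C_sub_X (2 : R)
  have h := congrArg (substAlgHom ha) (invOneSubPow R d).val_inv
  rw [invOneSubPow_inv_eq_one_sub_pow, map_mul, map_pow, map_sub, map_one, substAlgHom_X,
    coe_substAlgHom, show (1 - X * (C 2 - X) : R⟦X⟧) = (1 - X) ^ 2 by rw [map_ofNat]; ring,
    ← pow_mul, ← invOneSubPow_inv_eq_one_sub_pow, Units.inv_eq_val_inv,
    Units.mul_eq_one_iff_eq_inv, inv_inv] at h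
  exact h

end PowerSeries

section

variable {R : Type*} [CommRing R]

theorem sum_neg_one_pow_mul_two_pow_mul_choose_mul_choose (G m : ℕ) :
    ∑ r ∈ range (m + 1), (-1 : R) ^ r * 2 ^ (m - 2 * r) * (m - r).choose r * (G + (m - r)).choose G =
      (2 * G + 1 + m).choose (2 * G + 1) := by
  have h := congrArg (coeff m) (subst_X_mul_two_sub_X_invOneSubPow (R := R) (G + 1))
  have hsupp : (Function.support fun k ↦
      coeff k (invOneSubPow R (G + 1)).val • coeff m ((X * (C 2 - X) : R⟦X⟧) ^ k)) ⊆ range (m + 1) := by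
    intro k hk
    by_contra hkm
    rw [mem_coe, mem_range, not_lt] at hkm
    rw [Function.mem_support, coeff_X_mul_C_sub_X_pow, if_neg (by omega), smul_zero] at hk
    exact hk rfl
  rw [coeff_subst' (hasSubst_X_mul_C_sub_X 2), finsum_eq_sum_of_support_subset _ hsupp,
    show 2 * (G + 1) = (2 * G + 1) + 1 by ring, ← sum_range_reflect] at h
  simp only [invOneSubPow_val_succ_eq_mk_add_choose, coeff_mk, smul_eq_mul] at h
  rw [← h]
  refine sum_congr rfl fun r hr ↦ ?_
  rw [mem_range] at hr
  rw [add_tsub_cancel_right, coeff_X_mul_C_sub_X_pow, if_pos (by omega), Nat.sub_sub_self (by omega),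
    show m - r - r = m - 2 * r by omega]
  ring

theorem sum_neg_one_pow_mul_two_pow_mul_choose_mul_choose_of_le
    (G : ℕ) {m M : ℕ} (hmM : m ≤ M) :
    ∑ r ∈ range (M + 1), (-1 : R) ^ r * 2 ^ (m - 2 * r) * (m - r).choose r * (G + (m - r)).choose G =
      (2 * G + 1 + m).choose (2 * G + 1) := by
  rw [← sum_neg_one_pow_mul_two_pow_mul_choose_mul_choose G m]
  refine (sum_subset (range_subset_range.2 (by omega)) fun r _ hr ↦ ?_).symm
  rw [mem_range, not_lt] at hr
  rw [Nat.choose_eq_zero_of_lt (show m - r < r by omega)]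
  simp

theorem sum_neg_one_pow_mul_choose_mul_choose_add (N d n : ℕ) :
    ∑ j ∈ range (n + 1), (-1 : R) ^ j * N.choose j * (N + d + (n - j)).choose (N + d) =
      (d + n).choose d := by
  have h := congrArg (coeff n)
    (one_sub_pow_mul_invOneSubPow_val_add_eq_invOneSubPow_val R (d + 1) N)
  rw [coeff_mul, Nat.sum_antidiagonal_eq_sum_range_succ_mk, show d + 1 + N = N + d + 1 by ring] at h
  simpa only [coeff_one_sub_X_pow, invOneSubPow_val_succ_eq_mk_add_choose, coeff_mk] using h

end

theorem bini_term_eq (g n j r : ℕ) (hj : j ≤ n) :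
    (if j + 2 * r ≤ n ∧ j ≤ 2 * g + 2 then
        (-1 : ℚ) ^ (n - j - r) * 2 ^ (n - j - 2 * r) *
          ((2 * g - 1 + n - j - r).factorial : ℚ) /
            ((j.factorial : ℚ) * (r.factorial : ℚ) * (((2 * g + 2 - j).factorial : ℚ)) *
              ((n - j - 2 * r).factorial : ℚ))
      else 0) =
      (2 * g - 1).factorial / (2 * g + 2).factorial * (-1) ^ n *
        ((-1) ^ j * (2 * g + 2).choose j) *
        ((-1) ^ r * 2 ^ (n - j - 2 * r) * (n - j - r).choose r *
          (2 * g - 1 + (n - j - r)).choose (2 * g - 1)) := by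
  split_ifs with hcond
  · obtain ⟨hjr, hjg⟩ := hcond
    have hsign : (-1 : ℚ) ^ (n - j - r) = (-1) ^ n * (-1) ^ j * (-1) ^ r := by
      rw [← pow_add, ← pow_add, show n + j + r = n - j - r + 2 * (j + r) by omega, pow_add,
        pow_mul, neg_one_sq, one_pow, mul_one]
    rw [hsign, Nat.cast_choose ℚ hjg, Nat.cast_choose ℚ (show r ≤ n - j - r by omega),
      Nat.cast_choose ℚ (Nat.le_add_right _ _), show n - j - r - r = n - j - 2 * r by omega,
      Nat.add_sub_cancel_left, show 2 * g - 1 + n - j - r = 2 * g - 1 + (n - j - r) by omega]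
    field_simp
  · rcases le_or_gt j (2 * g + 2) with hjg | hjg
    · rw [Nat.choose_eq_zero_of_lt (show n - j - r < r by omega)]
      simp
    · rw [Nat.choose_eq_zero_of_lt hjg]
      simp

theorem bini_key_lemma (g n : ℕ) (hg : 2 ≤ g) :
    ∑ j ∈ Finset.range (n + 1), ∑ r ∈ Finset.range (n + 1),
      (if j + 2 * r ≤ n ∧ j ≤ 2 * g + 2 then
        (-1 : ℚ) ^ (n - j - r) * 2 ^ (n - j - 2 * r) *
          ((2 * g - 1 + n - j - r).factorial : ℚ) /
            ((j.factorial : ℚ) * (r.factorial : ℚ) * (((2 * g + 2 - j).factorial : ℚ)) *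
              ((n - j - 2 * r).factorial : ℚ))
      else 0)
    = (-1 : ℚ) ^ n * ((2 * g + n - 3).factorial : ℚ) /
        ((2 * g : ℚ) * (2 * g + 1) * (2 * g + 2) * (n.factorial : ℚ) *
          ((2 * g - 3).factorial : ℚ)) := by
  have hG : 2 * (2 * g - 1) + 1 = 2 * g + 2 + (2 * g - 3) := by omega
  rw [sum_congr rfl fun j hj ↦ sum_congr rfl fun r _ ↦
    bini_term_eq g n j r (Nat.lt_succ_iff.1 (mem_range.1 hj))]
  simp only [← mul_sum, sum_neg_one_pow_mul_two_pow_mul_choose_mul_choose_of_le _ (Nat.sub_le n _), hG]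
  simp only [mul_assoc, ← mul_sum]
  simp only [← mul_assoc]
  rw [sum_neg_one_pow_mul_choose_mul_choose_add]
  obtain ⟨k, rfl⟩ := Nat.exists_eq_add_of_le' hg
  rw [show 2 * (k + 2) - 1 = 2 * k + 3 by omega, show 2 * (k + 2) + 2 = 2 * k + 3 + 1 + 1 + 1 by omega,
    show 2 * (k + 2) - 3 = 2 * k + 1 by omega, show 2 * (k + 2) + n - 3 = 2 * k + 1 + n by omega,
    Nat.cast_choose ℚ (Nat.le_add_right _ n), Nat.add_sub_cancel_left]
  simp only [Nat.factorial_succ]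
  push_cast
  field_simp
  ring
end
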